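/- arXiv:2301.00094 — 4 statements merged into one kernel-verified Lean document; each statement's English description precedes it below -/
import Mathlib

section
/- Let R be a commutative ring and I an ideal of R. The set of elements of R that are integral over I forms an ideal of R. -/
/-- `f` is integrally dependent on the ideal `I`. -/
def IsIntegralOnIdeal {R : Type*} [CommRing R] (I : Ideal R) (f : R) : Prop :=
  ∃ d : ℕ, 0 < d ∧ ∃ a : ℕ → R,
    (∀ k ∈ Finset.Icc 1 d, a k ∈ I ^ k) ∧
    f ^ d + ∑ k ∈ Finset.Icc 1 d, a k * f ^ (d - k) = 0

section Aux

open Polynomial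

variable {R : Type*} [CommRing R] (I : Ideal R)

lemma fwd {f : R} (h : IsIntegralOnIdeal I f) :
    IsIntegral (reesAlgebra I) (C f * X : R[X]) := by
  obtain ⟨d, hd, a, ha, heq⟩ := h
  set a' : ℕ → R := fun k => if k ∈ Finset.Icc 1 d then a k else 0 with ha'
  have hmem : ∀ k, a' k ∈ I ^ k := by
    intro k
    by_cases hk : k ∈ Finset.Icc 1 d
    · simp only [ha', if_pos hk]; exact ha k hk
    · simp only [ha', if_neg hk]; exact zero_mem _
  have hsum : ∑ k ∈ Finset.Icc 1 d, a' k * f ^ (d - k)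
      = ∑ k ∈ Finset.Icc 1 d, a k * f ^ (d - k) :=
    Finset.sum_congr rfl (fun k hk => by simp only [ha', if_pos hk])
  refine ⟨X ^ d + ∑ k ∈ Finset.Icc 1 d,
      C (⟨monomial k (a' k), reesAlgebra.monomial_mem.mpr (hmem k)⟩ : reesAlgebra I)
        * X ^ (d - k), ?_, ?_⟩
  · refine monic_X_pow_add ?_
    refine lt_of_le_of_lt (Polynomial.degree_sum_le _ _) ?_
    rw [Finset.sup_lt_iff (by exact_mod_cast WithBot.bot_lt_coe d)]
    intro k hk
    obtain ⟨h1, h2⟩ := Finset.mem_Icc.mp hk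
    refine lt_of_le_of_lt (degree_mul_le _ _) ?_
    refine lt_of_le_of_lt (add_le_add degree_C_le (degree_X_pow_le _)) ?_
    rw [zero_add]
    exact_mod_cast Nat.cast_lt.mpr (by omega : d - k < d)
  · simp only [eval₂_add, eval₂_pow, eval₂_X, eval₂_finset_sum, eval₂_mul, eval₂_C]
    have hz : ∀ m : ℕ, (C f * X : R[X]) ^ m = monomial m (f ^ m) := by
      intro m
      rw [mul_pow, ← C_pow, C_mul_X_pow_eq_monomial]
    have halg : ∀ x : reesAlgebra I, algebraMap (reesAlgebra I) R[X] x = (x : R[X]) :=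
      fun x => rfl
    rw [hz]
    calc (monomial d (f ^ d) : R[X]) + ∑ k ∈ Finset.Icc 1 d,
          algebraMap (reesAlgebra I) R[X] ⟨monomial k (a' k), _⟩ * (C f * X) ^ (d - k)
        = monomial d (f ^ d) + ∑ k ∈ Finset.Icc 1 d, monomial d (a' k * f ^ (d - k)) := by
          congr 1
          refine Finset.sum_congr rfl (fun k hk => ?_)
          rw [halg, hz, monomial_mul_monomial,
            Nat.add_sub_cancel' (Finset.mem_Icc.mp hk).2]
      _ = monomial d (f ^ d + ∑ k ∈ Finset.Icc 1 d, a' k * f ^ (d - k)) := by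
          rw [← map_sum, ← map_add]
      _ = 0 := by rw [hsum, heq, monomial_zero_right]

lemma bwd {f : R} (h : IsIntegral (reesAlgebra I) (C f * X : R[X])) :
    IsIntegralOnIdeal I f := by
  by_cases hR : Subsingleton R
  · exact ⟨1, one_pos, 0, by simp, Subsingleton.elim _ _⟩
  have : Nontrivial R := not_subsingleton_iff_nontrivial.mp hR
  have : Nontrivial (reesAlgebra I) :=
    ⟨0, 1, fun hh => zero_ne_one (congrArg Subtype.val hh)⟩
  obtain ⟨p, hp, hpe⟩ := h
  set q : Polynomial (reesAlgebra I) := p * X with hq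
  have hqm : q.Monic := hp.mul monic_X
  have hqe : eval₂ (algebraMap (reesAlgebra I) R[X]) (C f * X) q = 0 := by
    rw [hq, eval₂_mul, eval₂_X, hpe, zero_mul]
  set n := q.natDegree with hn
  have hn0 : 0 < n := by
    rw [hn, hq, hp.natDegree_mul monic_X, natDegree_X]
    omega
  have hz : ∀ m : ℕ, (C f * X : R[X]) ^ m = monomial m (f ^ m) := by
    intro m
    rw [mul_pow, ← C_pow, C_mul_X_pow_eq_monomial]
  rw [eval₂_eq_sum_range] at hqe
  -- take the coefficient of degree n
  have hc : (f ^ n) + ∑ i ∈ Finset.range n,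
      ((q.coeff i : R[X])).coeff (n - i) * f ^ i = 0 := by
    have := congrArg (fun g : R[X] => g.coeff n) hqe
    simp only [finset_sum_coeff, coeff_zero] at this
    rw [Finset.sum_range_succ] at this
    have halg : ∀ x : reesAlgebra I, algebraMap (reesAlgebra I) R[X] x = (x : R[X]) :=
      fun x => rfl
    have hterm : ∀ i ≤ n,
        (algebraMap (reesAlgebra I) R[X] (q.coeff i) * (C f * X) ^ i).coeff n
          = ((q.coeff i : R[X])).coeff (n - i) * f ^ i := by
      intro i hi
      rw [halg, hz]
      conv_lhs => rw [show n = n - i + i from (Nat.sub_add_cancel hi).symm]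
      rw [coeff_mul_monomial]
    rw [Finset.sum_congr rfl (fun i hi => hterm i (le_of_lt (Finset.mem_range.mp hi)))] at this
    rw [hterm n le_rfl] at this
    rw [hqm.coeff_natDegree] at this
    simp only [Nat.sub_self, OneMemClass.coe_one, coeff_one_zero, one_mul] at this
    rw [add_comm] at this
    exact this
  refine ⟨n, hn0, fun k => ((q.coeff (n - k) : R[X])).coeff k, ?_, ?_⟩
  · intro k hk
    exact (mem_reesAlgebra_iff I _).mp (q.coeff (n - k)).2 k
  · rw [← hc]
    congr 1
    refine Finset.sum_nbij' (fun k => n - k) (fun i => n - i) ?_ ?_ ?_ ?_ ?_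
    · intro k hk
      obtain ⟨h1, h2⟩ := Finset.mem_Icc.mp hk
      rw [Finset.mem_range]; omega
    · intro i hi
      rw [Finset.mem_range] at hi
      rw [Finset.mem_Icc]; omega
    · intro k hk
      obtain ⟨h1, h2⟩ := Finset.mem_Icc.mp hk
      omega
    · intro i hi
      rw [Finset.mem_range] at hi
      omega
    · intro k hk
      obtain ⟨h1, h2⟩ := Finset.mem_Icc.mp hk
      rw [Nat.sub_sub_self h2]

end Aux

open Polynomial in
/-- The set of elements of `R` integral over an ideal `I` is an ideal of `R`. -/
theorem stmt1 {R : Type*} [CommRing R] (I : Ideal R) :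
    ∃ K : Ideal R, ∀ f : R, f ∈ K ↔ IsIntegralOnIdeal I f := by
  refine ⟨{ carrier := {f | IsIntegral (reesAlgebra I) (C f * X : R[X])},
            add_mem' := ?_, zero_mem' := ?_, smul_mem' := ?_ }, fun f => ⟨bwd I, fwd I⟩⟩
  · intro a b ha hb
    simpa [C_add, add_mul] using ha.add hb
  · simpa using isIntegral_zero (R := reesAlgebra I) (B := R[X])
  · intro c x hx
    have h1 : IsIntegral (reesAlgebra I) (C c : R[X]) :=
      isIntegral_algebraMap (x := (⟨C c, (reesAlgebra I).algebraMap_mem c⟩ : reesAlgebra I))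
    have := h1.mul hx
    simpa [smul_eq_mul, C_mul, mul_assoc] using this
end

section
/- Let R be a commutative ring and I an ideal. The integral closure of I is integrally closed: if f is integral over the integral closure of I, then f is integral over I. -/
open Polynomial

theorem helper_isIntegral {R : Type*} [CommRing R] {T : Type*} [CommRing T]
    [Algebra T R[X]] (f : R) (d : ℕ) (hd : 0 < d) (a : ℕ → R)
    (ha : ∀ k ∈ Finset.Icc 1 d, ∃ c : T, algebraMap T R[X] c = monomial k (a k))
    (heq : f ^ d + ∑ k ∈ Finset.Icc 1 d, a k * f ^ (d - k) = 0) :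
    IsIntegral T (monomial 1 f : R[X]) := by
  choose c hc using ha
  refine ⟨X ^ d + ∑ k ∈ (Finset.Icc 1 d).attach, C (c k.1 k.2) * X ^ (d - k.1), ?_, ?_⟩
  · apply monic_X_pow_add
    refine lt_of_le_of_lt (Polynomial.degree_sum_le _ _) ?_
    rw [Finset.sup_lt_iff (by exact_mod_cast WithBot.bot_lt_coe d)]
    rintro ⟨k, hk⟩ -
    refine lt_of_le_of_lt (degree_mul_le _ _) ?_
    have hk1 : 1 ≤ k := (Finset.mem_Icc.mp hk).1
    have hkd : k ≤ d := (Finset.mem_Icc.mp hk).2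
    calc degree (C (c k hk)) + degree (X ^ (d - k) : T[X])
        ≤ 0 + (d - k : ℕ) := add_le_add degree_C_le (degree_X_pow_le _)
      _ = ((d - k : ℕ) : WithBot ℕ) := by rw [zero_add]
      _ < (d : WithBot ℕ) := Nat.cast_lt.mpr (Nat.sub_lt hd hk1)
  · rw [eval₂_add, eval₂_X_pow, eval₂_finset_sum]
    have : ∀ k ∈ (Finset.Icc 1 d).attach,
        eval₂ (algebraMap T R[X]) (monomial 1 f) (C (c k.1 k.2) * X ^ (d - k.1))
          = monomial d (a k.1 * f ^ (d - k.1)) := by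
      rintro ⟨k, hk⟩ -
      have hkd : k ≤ d := (Finset.mem_Icc.mp hk).2
      rw [eval₂_mul, eval₂_C, eval₂_X_pow, hc k hk, monomial_pow, one_mul,
        monomial_mul_monomial, Nat.add_sub_cancel' hkd]
    rw [Finset.sum_congr rfl this, monomial_pow, one_mul, Finset.sum_attach (Finset.Icc 1 d)
      (fun k => (monomial d (a k * f ^ (d - k)) : R[X])), ← map_sum (monomial d) _ (Finset.Icc 1 d),
      ← map_add (monomial d), heq, map_zero]

theorem helper_back {R : Type*} [CommRing R] (I : Ideal R) (f : R)
    (h : IsIntegral (reesAlgebra I) (monomial 1 f : R[X])) : IsIntegralOnIdeal I f := by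
  cases subsingleton_or_nontrivial R with
  | inl hs =>
    exact ⟨1, one_pos, 0, fun k _ => Submodule.zero_mem _, Subsingleton.elim _ _⟩
  | inr hn =>
    obtain ⟨P, hP, hPe⟩ := h
    set Q : R[X][X] := P.map (algebraMap (reesAlgebra I) R[X]) with hQ
    have hQm : Q.Monic := hP.map _
    have hQd : Q.natDegree = P.natDegree := hP.natDegree_map _
    set d := Q.natDegree with hd
    have hQe : Polynomial.eval (monomial 1 f : R[X]) Q = 0 := by
      rw [hQ, eval_map]; exact hPe
    -- d > 0
    have hd0 : 0 < d := by
      by_contra h0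
      have : P.natDegree = 0 := by omega
      rw [hP.natDegree_eq_zero] at this
      rw [this, Polynomial.map_one] at hQ
      rw [hQ, eval_one] at hQe
      exact one_ne_zero hQe
    refine ⟨d, hd0, fun k => (Q.coeff (d - k)).coeff k, ?_, ?_⟩
    · intro k hk
      obtain ⟨hk1, hkd⟩ := Finset.mem_Icc.mp hk
      have : Q.coeff (d - k) ∈ reesAlgebra I := by
        rw [hQ, coeff_map]
        exact (P.coeff (d - k)).2
      exact (mem_reesAlgebra_iff I _).mp this k
    · have key : (Polynomial.eval (monomial 1 f : R[X]) Q).coeff d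
          = f ^ d + ∑ k ∈ Finset.Icc 1 d, (Q.coeff (d - k)).coeff k * f ^ (d - k) := by
        rw [eval_eq_sum_range]
        rw [finset_sum_coeff]
        have hterm : ∀ i ∈ Finset.range (d + 1),
            (Q.coeff i * (monomial 1 f : R[X]) ^ i).coeff d
              = (Q.coeff i).coeff (d - i) * f ^ i := by
          intro i hi
          have hid : i ≤ d := by simpa [Nat.lt_succ_iff] using hi
          rw [monomial_pow, one_mul]
          have : d = (d - i) + i := by omega
          rw [this, coeff_mul_monomial, Nat.add_sub_cancel]
        rw [Finset.sum_congr rfl hterm, Finset.sum_range_succ]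
        have hlead : (Q.coeff d).coeff (d - d) * f ^ d = f ^ d := by
          rw [Nat.sub_self]
          have : Q.coeff d = 1 := hQm.coeff_natDegree
          rw [this, coeff_one]
          simp
        rw [hlead, add_comm]
        congr 1
        refine Finset.sum_nbij' (fun i => d - i) (fun k => d - k) ?_ ?_ ?_ ?_ ?_
        · intro i hi; simp only [Finset.mem_range] at hi; simp only [Finset.mem_Icc]; omega
        · intro k hk; simp only [Finset.mem_Icc] at hk; simp only [Finset.mem_range]; omega
        · intro i hi; simp only [Finset.mem_range] at hi; omega
        · intro k hk; simp only [Finset.mem_Icc] at hk; omega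
        · intro i hi
          simp only [Finset.mem_range] at hi
          have h1 : d - (d - i) = i := by omega
          rw [h1]
      rw [hQe, coeff_zero] at key
      exact key.symm

theorem monomial_mem_closure {R : Type*} [CommRing R] (I J : Ideal R)
    (hJ : ∀ g ∈ J, IsIntegral (reesAlgebra I) (monomial 1 g : R[X])) :
    ∀ (k : ℕ) (b : R), b ∈ J ^ k →
      (monomial k b : R[X]) ∈ integralClosure (reesAlgebra I) R[X] := by
  intro k
  induction k with
  | zero =>
    intro b _
    have hC : (monomial 0 b : R[X]) ∈ reesAlgebra I := reesAlgebra.monomial_mem.mpr (by simp)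
    exact (integralClosure (reesAlgebra I) R[X]).algebraMap_mem ⟨monomial 0 b, hC⟩
  | succ n ih =>
    intro b hb
    rw [pow_succ'] at hb
    refine Submodule.mul_induction_on hb ?_ ?_
    · intro g hg x hx
      have h1 : (monomial 1 g : R[X]) ∈ integralClosure (reesAlgebra I) R[X] := hJ g hg
      have h2 := ih x hx
      have : (monomial (n + 1) (g * x) : R[X]) = monomial 1 g * monomial n x := by
        rw [monomial_mul_monomial, add_comm]
      rw [this]
      exact mul_mem h1 h2
    · intro x y hx hy
      rw [map_add]
      exact add_mem hx hy

set_option synthInstance.maxHeartbeats 1000000 in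
set_option maxHeartbeats 2000000 in
/-- The integral closure of an ideal is integrally closed: if every element of an ideal `J`
is integral over `I` (e.g. `J` is the integral closure of `I`), and `f` is integral over `J`,
then `f` is integral over `I`. -/
theorem stmt2 {R : Type*} [CommRing R] (I J : Ideal R)
    (hJ : ∀ g ∈ J, IsIntegralOnIdeal I g) (f : R)
    (hf : IsIntegralOnIdeal J f) : IsIntegralOnIdeal I f := by
  apply helper_back I f
  obtain ⟨d, hd, a, haJ, heq⟩ := hf
  have hmem : ∀ g ∈ J, IsIntegral (reesAlgebra I) (monomial 1 g : R[X]) := by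
    intro g hg
    obtain ⟨e, he, b, hbI, heqg⟩ := hJ g hg
    exact helper_isIntegral g e he b
      (fun k hk => ⟨⟨monomial k (b k), reesAlgebra.monomial_mem.mpr (hbI k hk)⟩, rfl⟩) heqg
  have step : IsIntegral (integralClosure (reesAlgebra I) R[X]) (monomial 1 f : R[X]) := by
    refine helper_isIntegral f d hd a ?_ heq
    intro k hk
    exact ⟨⟨monomial k (a k), monomial_mem_closure I J hmem k (a k) (haJ k hk)⟩, rfl⟩
  exact isIntegral_trans _ step
end

section
/- Let R be a Noetherian commutative ring and J ⊆ I ideals. If the integral closures of J and I coincide, then J is a reduction of I, i.e., there exists n ≥ 0 with I^{n+1} = J·I^n. -/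
lemma IsIntegralOnIdeal.mono {R : Type*} [CommRing R] {J K : Ideal R} {f : R}
    (h : IsIntegralOnIdeal J f) (hJK : J ≤ K) : IsIntegralOnIdeal K f := by
  obtain ⟨d, hd, a, ha, heq⟩ := h
  exact ⟨d, hd, a, fun k hk => Ideal.pow_right_mono hJK k (ha k hk), heq⟩

lemma pow_sup_le_aux {R : Type*} [CommRing R] (J F : Ideal R) :
    ∀ d : ℕ, (J ⊔ F) ^ (d + 1) ≤ J * (J ⊔ F) ^ d ⊔ F ^ (d + 1) := by
  intro d
  induction d with
  | zero => simp
  | succ d ih =>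
    rw [pow_succ]
    calc (J ⊔ F) ^ (d + 1) * (J ⊔ F)
        ≤ (J * (J ⊔ F) ^ d ⊔ F ^ (d + 1)) * (J ⊔ F) := Ideal.mul_mono_left ih
      _ ≤ J * (J ⊔ F) ^ (d + 1) ⊔ F ^ (d + 2) := by
          rw [Submodule.sup_mul]
          apply sup_le
          · rw [mul_assoc, ← pow_succ]; exact le_sup_left
          · rw [Submodule.mul_sup]
            apply sup_le
            · refine le_trans ?_ (le_sup_left : _ ≤ _ ⊔ F ^ (d + 2))
              rw [mul_comm]
              exact Ideal.mul_mono_right (Ideal.pow_right_mono le_sup_right _)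
            · rw [← pow_succ]; exact le_sup_right

/-- single step: adjoining one integral element gives a reduction. -/
lemma single_reduction {R : Type*} [CommRing R] {J : Ideal R} {f : R}
    (h : IsIntegralOnIdeal J f) :
    ∃ n : ℕ, (J ⊔ Ideal.span {f}) ^ (n + 1) = J * (J ⊔ Ideal.span {f}) ^ n := by
  obtain ⟨d, hd, a, ha, heq⟩ := h
  obtain ⟨n, rfl⟩ : ∃ n, d = n + 1 := ⟨d - 1, by omega⟩
  refine ⟨n, le_antisymm ?_ ?_⟩
  · set K := J ⊔ Ideal.span {f} with hK
    have hfK : f ∈ K := Submodule.mem_sup_right (Ideal.mem_span_singleton_self f)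
    have hfd : f ^ (n + 1) ∈ J * K ^ n := by
      have heq2 : f ^ (n + 1) = -∑ k ∈ Finset.Icc 1 (n + 1), a k * f ^ (n + 1 - k) := by
        linear_combination heq
      rw [heq2]
      apply neg_mem
      apply Ideal.sum_mem
      intro k hk
      obtain ⟨hk1, hk2⟩ := Finset.mem_Icc.mp hk
      have hak : a k ∈ J * J ^ (k - 1) := by
        have hpow : J ^ k = J * J ^ (k - 1) := by
          conv_lhs => rw [show k = (k - 1) + 1 by omega]
          rw [pow_succ, mul_comm]
        rw [← hpow]; exact ha k hk
      have hmem : a k * f ^ (n + 1 - k) ∈ (J * J ^ (k - 1)) * K ^ (n + 1 - k) :=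
        Ideal.mul_mem_mul hak (Ideal.pow_mem_pow hfK _)
      refine Set.mem_of_mem_of_subset hmem ?_
      calc (J * J ^ (k - 1)) * K ^ (n + 1 - k)
          ≤ (J * K ^ (k - 1)) * K ^ (n + 1 - k) :=
            Ideal.mul_mono_left (Ideal.mul_mono_right (Ideal.pow_right_mono le_sup_left _))
        _ = J * (K ^ (k - 1) * K ^ (n + 1 - k)) := mul_assoc _ _ _
        _ = J * K ^ n := by rw [← pow_add]; congr 2; omega
    calc K ^ (n + 1) ≤ J * K ^ n ⊔ Ideal.span {f} ^ (n + 1) := pow_sup_le_aux J _ n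
      _ ≤ J * K ^ n := by
          apply sup_le le_rfl
          rw [Ideal.span_singleton_pow]
          rwa [Ideal.span_singleton_le_iff_mem]
  · calc J * (J ⊔ Ideal.span {f}) ^ n ≤ (J ⊔ Ideal.span {f}) * (J ⊔ Ideal.span {f}) ^ n :=
        Ideal.mul_mono_left le_sup_left
      _ = (J ⊔ Ideal.span {f}) ^ (n + 1) := (pow_succ' _ _).symm

lemma reduction_trans {R : Type*} [CommRing R] {J K I : Ideal R}
    (hJK : J ≤ K) (hKI : K ≤ I)
    (h1 : ∃ m, K ^ (m + 1) = J * K ^ m) (h2 : ∃ n, I ^ (n + 1) = K * I ^ n) :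
    ∃ n, I ^ (n + 1) = J * I ^ n := by
  obtain ⟨m, hm⟩ := h1
  obtain ⟨n, hn⟩ := h2
  have key : ∀ j : ℕ, I ^ (n + j) = K ^ j * I ^ n := by
    intro j
    induction j with
    | zero => simp
    | succ j ih =>
      calc I ^ (n + (j + 1)) = I ^ (n + j) * I := by ring
        _ = K ^ j * I ^ n * I := by rw [ih]
        _ = K ^ j * I ^ (n + 1) := by ring
        _ = K ^ j * (K * I ^ n) := by rw [hn]
        _ = K ^ (j + 1) * I ^ n := by ring
  refine ⟨n + m, ?_⟩
  calc I ^ (n + m + 1) = K ^ (m + 1) * I ^ n := by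
        rw [show n + m + 1 = n + (m + 1) by omega, key (m + 1)]
    _ = J * K ^ m * I ^ n := by rw [hm]
    _ = J * (K ^ m * I ^ n) := mul_assoc _ _ _
    _ = J * I ^ (n + m) := by rw [← key m]

lemma finset_reduction {R : Type*} [CommRing R] {J : Ideal R} (s : Finset R)
    (hs : ∀ f ∈ s, IsIntegralOnIdeal J f) :
    ∃ n : ℕ, (J ⊔ Ideal.span ↑s) ^ (n + 1) = J * (J ⊔ Ideal.span ↑s) ^ n := by
  classical
  induction s using Finset.induction with
  | empty => exact ⟨0, by simp⟩
  | @insert f s hf ih =>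
    have hspan : (Ideal.span ↑(insert f s) : Ideal R) = Ideal.span ↑s ⊔ Ideal.span {f} := by
      rw [Finset.coe_insert, Set.insert_eq, Ideal.span_union, sup_comm]
    have hL : J ⊔ Ideal.span ↑(insert f s) = (J ⊔ Ideal.span ↑s) ⊔ Ideal.span {f} := by
      rw [hspan, sup_assoc]
    rw [hL]
    have h1 : ∃ m, (J ⊔ Ideal.span ↑s) ^ (m + 1) = J * (J ⊔ Ideal.span ↑s) ^ m :=
      ih (fun g hg => hs g (Finset.mem_insert_of_mem hg))
    have hfint : IsIntegralOnIdeal (J ⊔ Ideal.span ↑s) f :=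
      (hs f (Finset.mem_insert_self f s)).mono le_sup_left
    have h2 := single_reduction hfint
    exact reduction_trans (le_sup_left : J ≤ J ⊔ Ideal.span ↑s) le_sup_left h1 h2

/-- In a Noetherian ring, if `J ⊆ I` and the integral closures of `J` and `I` coincide,
then `J` is a reduction of `I`: `I^(n+1) = J·I^n` for some `n ≥ 0`. -/
theorem stmt3 {R : Type*} [CommRing R] [IsNoetherianRing R] (I J : Ideal R) (hJI : J ≤ I)
    (hcl : ∀ f : R, IsIntegralOnIdeal J f ↔ IsIntegralOnIdeal I f) :
    ∃ n : ℕ, I ^ (n + 1) = J * I ^ n := by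
  obtain ⟨s, hs⟩ := (isNoetherianRing_iff_ideal_fg R).mp ‹_› I
  have hsub : ∀ f ∈ s, IsIntegralOnIdeal J f := by
    intro f hfs
    apply (hcl f).mpr
    refine ⟨1, one_pos, fun _ => -f, ?_, ?_⟩
    · intro k hk
      simp only [Finset.Icc_self, Finset.mem_singleton] at hk
      subst hk
      rw [pow_one]
      exact neg_mem (hs ▸ Ideal.subset_span hfs : f ∈ I)
    · simp
  have hI : J ⊔ Ideal.span ↑s = I := by rw [hs]; exact sup_eq_right.mpr (hs ▸ hJI)
  obtain ⟨n, hn⟩ := finset_reduction s hsub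
  exact ⟨n, by rw [← hI]; exact hn⟩
end

section
/- Let R be a commutative ring and I an ideal. For any f integral over I and g integral over I, the product f·g is integral over I^2. -/
set_option synthInstance.maxHeartbeats 1000000
set_option maxHeartbeats 1000000

open Polynomial

lemma sum_Icc_reflect {M : Type*} [AddCommMonoid M] (n : ℕ) (F : ℕ → M) :
    ∑ k ∈ Finset.Icc 1 n, F k = ∑ i ∈ Finset.range n, F (n - i) := by
  refine Finset.sum_nbij' (fun k => n - k) (fun i => n - i) ?_ ?_ ?_ ?_ ?_ <;>
    simp only [Finset.mem_Icc, Finset.mem_range] <;> intros <;>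
    first
      | omega
      | (congr 1; omega)

/-- Range-indexed form of `IsIntegralOnIdeal`. -/
lemma isIntegralOnIdeal_iff_range {R : Type*} [CommRing R] (I : Ideal R) (f : R) :
    IsIntegralOnIdeal I f ↔ ∃ n : ℕ, 0 < n ∧ ∃ q : ℕ → R,
      (∀ i ∈ Finset.range n, q i ∈ I ^ (n - i)) ∧
      f ^ n + ∑ i ∈ Finset.range n, q i * f ^ i = 0 := by
  constructor
  · rintro ⟨d, hd, a, ha, heq⟩
    refine ⟨d, hd, fun i => a (d - i), fun i hi => ?_, ?_⟩
    · rw [Finset.mem_range] at hi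
      exact ha _ (Finset.mem_Icc.mpr ⟨by omega, by omega⟩)
    · rw [sum_Icc_reflect d (fun k => a k * f ^ (d - k))] at heq
      convert heq using 2
      refine Finset.sum_congr rfl fun i hi => ?_
      rw [Finset.mem_range] at hi
      congr 2
      omega
  · rintro ⟨n, hn, q, hq, heq⟩
    refine ⟨n, hn, fun k => q (n - k), fun k hk => ?_, ?_⟩
    · rw [Finset.mem_Icc] at hk
      have := hq (n - k) (Finset.mem_range.mpr (by omega))
      have h2 : n - (n - k) = k := by omega
      rwa [h2] at this
    · rw [sum_Icc_reflect n (fun k => q (n - k) * f ^ (n - k))]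
      convert heq using 2
      refine Finset.sum_congr rfl fun i hi => ?_
      rw [Finset.mem_range] at hi
      congr 2 <;> omega

lemma isIntegral_CX {R : Type*} [CommRing R] (I : Ideal R) (f : R)
    (hf : IsIntegralOnIdeal I f) :
    IsIntegral (reesAlgebra I) (C f * X : R[X]) := by
  rw [isIntegralOnIdeal_iff_range] at hf
  obtain ⟨n, hn, q0, hq0, heq0⟩ := hf
  set q : ℕ → R := fun i => if i < n then q0 i else 0 with hqdef
  have hq : ∀ i, q i ∈ I ^ (n - i) := by
    intro i
    by_cases h : i < n
    · simpa [hqdef, h] using hq0 i (Finset.mem_range.mpr h)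
    · simp [hqdef, h]
  have heq : f ^ n + ∑ i ∈ Finset.range n, q i * f ^ i = 0 := by
    rw [show ∑ i ∈ Finset.range n, q i * f ^ i = ∑ i ∈ Finset.range n, q0 i * f ^ i from
      Finset.sum_congr rfl fun i hi => by
        rw [hqdef]; simp [Finset.mem_range.mp hi]]
    exact heq0
  refine ⟨X ^ n + ∑ i ∈ Finset.range n,
      C (⟨monomial (n - i) (q i), reesAlgebra.monomial_mem.mpr (hq i)⟩ :
        reesAlgebra I) * X ^ i, ?_, ?_⟩
  · apply monic_X_pow_add
    apply lt_of_le_of_lt (degree_sum_le _ _)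
    rw [Finset.sup_lt_iff (by exact_mod_cast WithBot.bot_lt_coe n)]
    intro i hi
    rw [Finset.mem_range] at hi
    exact lt_of_le_of_lt (degree_C_mul_X_pow_le _ _) (by exact_mod_cast hi)
  · rw [eval₂_add, eval₂_pow, eval₂_X, eval₂_finset_sum]
    have hterm : ∀ i ∈ Finset.range n,
        eval₂ (algebraMap (reesAlgebra I) R[X]) (C f * X)
          (C (⟨monomial (n - i) (q i), reesAlgebra.monomial_mem.mpr (hq i)⟩ :
            reesAlgebra I) * X ^ i) = C (q i * f ^ i) * X ^ n := by
      intro i hi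
      rw [Finset.mem_range] at hi
      rw [eval₂_mul, eval₂_C, eval₂_pow, eval₂_X]
      show monomial (n - i) (q i) * (C f * X) ^ i = _
      rw [mul_pow, ← C_pow, ← C_mul_X_pow_eq_monomial, mul_mul_mul_comm, ← C_mul,
        ← pow_add, Nat.sub_add_cancel hi.le]
    rw [Finset.sum_congr rfl hterm, ← Finset.sum_mul, mul_pow, ← C_pow,
      ← map_sum C (fun i => q i * f ^ i) (Finset.range n),
      ← add_mul, ← C_add, heq, map_zero, zero_mul]

/-- If `f` and `g` are integral over `I`, then `f·g` is integral over `I^2`. -/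
theorem stmt11 {R : Type*} [CommRing R] (I : Ideal R) (f g : R)
    (hf : IsIntegralOnIdeal I f) (hg : IsIntegralOnIdeal I g) :
    IsIntegralOnIdeal (I ^ 2) (f * g) := by
  rcases subsingleton_or_nontrivial R with hR | hR
  · exact ⟨1, one_pos, 0, by simp, Subsingleton.elim _ _⟩
  haveI : Nontrivial (reesAlgebra I) :=
    ⟨⟨0, 1, fun h => zero_ne_one (congrArg Subtype.val h)⟩⟩
  have hfg : IsIntegral (reesAlgebra I) (C f * X * (C g * X) : R[X]) :=
    (isIntegral_CX I f hf).mul (isIntegral_CX I g hg)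
  obtain ⟨p0, hp0, hev0⟩ := hfg
  set z : R[X] := C f * X * (C g * X) with hzdef
  have hz : z = C (f * g) * X ^ 2 := by rw [hzdef, C_mul]; ring
  set p : Polynomial (reesAlgebra I) := p0 * X with hpdef
  have hp : p.Monic := hp0.mul monic_X
  have hev : Polynomial.aeval z p = 0 := by
    rw [hpdef, map_mul, Polynomial.aeval_X]
    rw [show (Polynomial.aeval z) p0 = 0 from hev0, zero_mul]
  set n := p.natDegree with hndef
  have hn : 0 < n := by
    rw [hndef, hpdef, hp0.natDegree_mul monic_X, natDegree_X]
    omega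
  have key : (f * g) ^ n +
      ∑ i ∈ Finset.range n, ((p.coeff i : R[X]).coeff (2 * (n - i))) * (f * g) ^ i = 0 := by
    have hev2 : (Polynomial.aeval z) (X ^ n + ∑ i ∈ Finset.range n, C (p.coeff i) * X ^ i)
        = 0 := by rw [← hp.as_sum]; exact hev
    have this := congrArg (fun q : R[X] => q.coeff (2 * n)) hev2
    simp only [coeff_zero] at this
    rw [map_add, map_pow, Polynomial.aeval_X, map_sum] at this
    have hzpow : ∀ m : ℕ, z ^ m = C ((f * g) ^ m) * X ^ (2 * m) := by
      intro m
      rw [hz, mul_pow, ← C_pow, ← pow_mul]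
    have hterm : ∀ i ∈ Finset.range n,
        ((Polynomial.aeval z) (C (p.coeff i) * X ^ i)).coeff (2 * n)
          = ((p.coeff i : R[X]).coeff (2 * (n - i))) * (f * g) ^ i := by
      intro i hi
      rw [Finset.mem_range] at hi
      rw [map_mul, map_pow, Polynomial.aeval_X, Polynomial.aeval_C]
      show ((p.coeff i : R[X]) * z ^ i).coeff (2 * n) = _
      rw [hzpow, ← mul_assoc, coeff_mul_X_pow', if_pos (by omega), coeff_mul_C]
      congr 2
      omega
    rw [hzpow, coeff_add, coeff_C_mul, coeff_X_pow, if_pos rfl, mul_one,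
      finset_sum_coeff, Finset.sum_congr rfl hterm] at this
    exact this
  rw [isIntegralOnIdeal_iff_range]
  refine ⟨n, hn, fun i => (p.coeff i : R[X]).coeff (2 * (n - i)), fun i hi => ?_, key⟩
  show ((p.coeff i : R[X]).coeff (2 * (n - i))) ∈ (I ^ 2) ^ (n - i)
  rw [← pow_mul]
  exact (p.coeff i).2 (2 * (n - i))
end
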